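/- Let T be a {−3}-self dual tournament on a vertex set V with |V| ≥ 8, and let a, b be two distinct vertices of T. If {a,b} is an interval of T, then δ⁺_T(a) = δ⁻_T(a). -/

import Mathlib

/-- A (finite) tournament on a vertex type `V`: for each pair of distinct
vertices exactly one arc. -/
structure Tournament (V : Type*) where
  arc : V → V → Prop
  irrefl : ∀ x, ¬ arc x x
  total : ∀ x y, x ≠ y → (arc x y ↔ ¬ arc y x)

namespace Tournament

variable {V W : Type*}

/-- The dual tournament, obtained by reversing all arcs. -/
def dual (T : Tournament V) : Tournament V where
  arc x y := T.arc y x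
  irrefl x := T.irrefl x
  total x y h := T.total y x (Ne.symm h)

/-- The subtournament induced on a subset `X` of the vertex set. -/
def restrict (T : Tournament V) (X : Set V) : Tournament X where
  arc x y := T.arc x y
  irrefl x := T.irrefl x
  total x y h := T.total x y (fun e => h (Subtype.ext e))

/-- Isomorphism of tournaments: an arc-preserving bijection. -/
def Iso (T : Tournament V) (T' : Tournament W) : Prop :=
  ∃ e : V ≃ W, ∀ x y, T.arc x y ↔ T'.arc (e x) (e y)

/-- `I` is an interval of `T`: every vertex outside `I` dominates all of `I`
or is dominated by all of `I`. -/
def IsInterval (T : Tournament V) (I : Set V) : Prop :=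
  ∀ x ∉ I, (∀ y ∈ I, T.arc x y) ∨ (∀ y ∈ I, T.arc y x)

/-- A tournament is indecomposable if all its intervals are trivial. -/
def Indecomposable (T : Tournament V) : Prop :=
  ∀ I : Set V, T.IsInterval I → I = ∅ ∨ I = Set.univ ∨ ∃ x, I = {x}

def Decomposable (T : Tournament V) : Prop := ¬ T.Indecomposable

/-- Transitive tournament (a linear order). -/
def Transitive (T : Tournament V) : Prop :=
  ∀ x y z, T.arc x y → T.arc y z → T.arc x z

/-- An almost transitive tournament is obtained from a transitive tournament
with at least 3 vertices by reversing the arc between its two extremal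
vertices. -/
def AlmostTransitive [Fintype V] (T : Tournament V) : Prop :=
  3 ≤ Fintype.card V ∧
  ∃ T₀ : Tournament V, T₀.Transitive ∧
    ∃ a b : V, a ≠ b ∧ (∀ y, y ≠ a → T₀.arc a y) ∧ (∀ y, y ≠ b → T₀.arc y b) ∧
      T.arc b a ∧
      ∀ x y, ¬ ((x = a ∧ y = b) ∨ (x = b ∧ y = a)) → (T.arc x y ↔ T₀.arc x y)

/-- Strong connectedness: a directed path between any two distinct vertices. -/
def StronglyConnected (T : Tournament V) : Prop :=
  ∀ x y : V, x ≠ y → Relation.TransGen T.arc x y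

/-- `{k}`-hypomorphy: the induced subtournaments on every `k`-element set of
vertices are isomorphic. -/
def Hypo (T T' : Tournament V) (k : ℕ) : Prop :=
  ∀ X : Set V, X.ncard = k → (T.restrict X).Iso (T'.restrict X)

/-- `{-k}`-hypomorphy, i.e. `{n-k}`-hypomorphy where `n` is the number of
vertices. -/
def MinusHypo [Fintype V] (T T' : Tournament V) (k : ℕ) : Prop :=
  Hypo T T' (Fintype.card V - k)

/-- Self duality. -/
def SelfDual (T : Tournament V) : Prop := T.Iso T.dual

/-- `{-k}`-self duality: removing any `k` vertices yields a self dual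
tournament. -/
def MinusSelfDual (T : Tournament V) (k : ℕ) : Prop :=
  ∀ X : Set V, X.ncard = k → (T.restrict Xᶜ).SelfDual

/-- `{-k}`-reconstructibility: every tournament `{-k}`-hypomorphic to `T` is
isomorphic to `T`. -/
def MinusReconstructible [Fintype V] (T : Tournament V) (k : ℕ) : Prop :=
  ∀ T' : Tournament V, MinusHypo T T' k → T.Iso T'

/-- Strong interval. -/
def IsStrongInterval (T : Tournament V) (X : Set V) : Prop :=
  T.IsInterval X ∧ ∀ Y : Set V, T.IsInterval Y → (X ∩ Y).Nonempty → X ⊆ Y ∨ Y ⊆ X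

/-- `P T` : the maximal strong intervals of `T` distinct from the full vertex
set. -/
def P (T : Tournament V) : Set (Set V) :=
  {X | X.Nonempty ∧ X ≠ Set.univ ∧ T.IsStrongInterval X ∧
    ∀ Y : Set V, Y ≠ Set.univ → T.IsStrongInterval Y → X ⊆ Y → X = Y}

/-- `Ptilde T` : equals `P T` when `T` is strongly connected; otherwise it
consists of the members of `P T` of size at least 2 together with the maximal
unions of consecutive singleton members (i.e. the maximal intervals of `T` all
of whose elements are singleton members of `P T`). -/
def Ptilde (T : Tournament V) : Set (Set V) :=
  {A | (T.StronglyConnected ∧ A ∈ T.P) ∨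
    (¬ T.StronglyConnected ∧
      ((A ∈ T.P ∧ 2 ≤ A.ncard) ∨
        (A.Nonempty ∧ (∀ x ∈ A, ({x} : Set V) ∈ T.P) ∧ T.IsInterval A ∧
          ∀ B : Set V, A ⊆ B → (∀ x ∈ B, ({x} : Set V) ∈ T.P) →
            T.IsInterval B → A = B)))}

/-- Equality of the quotients of `T` and `T'` by a common interval partition
`Part`: between any two distinct blocks, the arcs of `T` and `T'` agree. -/
def QuotientEq (T T' : Tournament V) (Part : Set (Set V)) : Prop :=
  ∀ X ∈ Part, ∀ Y ∈ Part, X ≠ Y → ∀ x ∈ X, ∀ y ∈ Y, (T.arc x y ↔ T'.arc x y)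

/-- The set of vertices outside `I` dominated by every vertex of `I`. -/
def Iplus (T : Tournament V) (I : Set V) : Set V :=
  {x | x ∉ I ∧ ∀ y ∈ I, T.arc y x}

/-- The set of vertices outside `I` dominating every vertex of `I`. -/
def Iminus (T : Tournament V) (I : Set V) : Set V :=
  {x | x ∉ I ∧ ∀ y ∈ I, T.arc x y}

/-- The 3-cycle `C₃`. -/
def C3Tour : Tournament (Fin 3) where
  arc x y := (x = 0 ∧ y = 1) ∨ (x = 1 ∧ y = 2) ∨ (x = 2 ∧ y = 0)
  irrefl := by decide
  total := by decide

/-- The transitive tournament `O_q` on `q` vertices. -/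
def LinOrd (q : ℕ) : Tournament (Fin q) where
  arc x y := x < y
  irrefl x := lt_irrefl x
  total x y h := by
    constructor
    · exact fun hxy hyx => lt_asymm hxy hyx
    · intro hyx
      exact lt_of_le_of_ne (not_lt.mp hyx) h

/-- The positive diamond `δ⁺` (on `{0,1,2,3}`, cycle `0→1→2→0`, all dominating
the center `3`). -/
def DeltaPlus : Tournament (Fin 4) where
  arc x y := (x = 0 ∧ y = 1) ∨ (x = 1 ∧ y = 2) ∨ (x = 2 ∧ y = 0) ∨
    (x = 0 ∧ y = 3) ∨ (x = 1 ∧ y = 3) ∨ (x = 2 ∧ y = 3)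
  irrefl := by decide
  total := by decide

/-- The negative diamond `δ⁻`. -/
def DeltaMinus : Tournament (Fin 4) := DeltaPlus.dual

/-- `T` embeds a diamond: some 4-element subset of the vertices induces a
diamond. -/
def EmbedsDiamond (T : Tournament V) : Prop :=
  ∃ X : Set V, X.ncard = 4 ∧
    ((T.restrict X).Iso DeltaPlus ∨ (T.restrict X).Iso DeltaMinus)

/-- `X` is a positive diamond of `T` with center `d`. -/
def IsPosDiamond (T : Tournament V) (X : Set V) (d : V) : Prop :=
  X.ncard = 4 ∧ d ∈ X ∧ (T.restrict X).Iso DeltaPlus ∧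
    (T.restrict (X \ {d})).Iso C3Tour ∧ ∀ y ∈ X \ {d}, T.arc y d

/-- `X` is a negative diamond of `T` with center `d`. -/
def IsNegDiamond (T : Tournament V) (X : Set V) (d : V) : Prop :=
  X.ncard = 4 ∧ d ∈ X ∧ (T.restrict X).Iso DeltaMinus ∧
    (T.restrict (X \ {d})).Iso C3Tour ∧ ∀ y ∈ X \ {d}, T.arc d y

/-- The tournament obtained from `H` by dilating the vertex `x` by `R`. -/
def Dilate {α β : Type*} (H : Tournament α) (x : α) (R : Tournament β) :
    Tournament ({y : α // y ≠ x} ⊕ β) where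
  arc u v :=
    match u, v with
    | .inl y, .inl z => H.arc y.1 z.1
    | .inl y, .inr _ => H.arc y.1 x
    | .inr _, .inl z => H.arc x z.1
    | .inr u, .inr v => R.arc u v
  irrefl u := by
    cases u with
    | inl y => exact H.irrefl y.1
    | inr u => exact R.irrefl u
  total u v h := by
    cases u with
    | inl y =>
      cases v with
      | inl z =>
        exact H.total y.1 z.1 (fun e => h (congrArg Sum.inl (Subtype.ext e)))
      | inr v => exact H.total y.1 x y.2
    | inr u =>
      cases v with
      | inl z => exact H.total x z.1 (Ne.symm z.2)
      | inr v => exact R.total u v (fun e => h (congrArg Sum.inr e))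

/-- The class `I_{n,K}` (for `K` a set of positive integers representing the
negative indices): tournaments on `n` vertices which are indecomposable, not
self dual, and `{-k}`-self dual for every `k ∈ K`. -/
def ClassI (n : ℕ) (K : Set ℕ) (R : Tournament (Fin n)) : Prop :=
  R.Indecomposable ∧ ¬ R.SelfDual ∧ ∀ k ∈ K, R.MinusSelfDual k

/-- Membership (up to isomorphism) in the class
`Ω_n = C₃(I_{n-2,{-1,-2,-3}}) ∪ O₃(I_{n-2,{-1,-2,-3}}) ∪ O₂(I_{n-1,{-2,-3}})`. -/
def InOmega (n : ℕ) (T : Tournament V) : Prop :=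
  (∃ R : Tournament (Fin (n - 2)), ClassI (n - 2) {1, 2, 3} R ∧
    ∃ x : Fin 3, T.Iso (Dilate C3Tour x R)) ∨
  (∃ R : Tournament (Fin (n - 2)), ClassI (n - 2) {1, 2, 3} R ∧
    ∃ x : Fin 3, T.Iso (Dilate (LinOrd 3) x R)) ∨
  (∃ R : Tournament (Fin (n - 1)), ClassI (n - 1) {2, 3} R ∧
    ∃ x : Fin 2, T.Iso (Dilate (LinOrd 2) x R))

end Tournament

/-!
Call a 5-set a doubled diamond if it consists of a 3-cycle dominating two further vertices; the
doubled diamonds of `T.dual` are the negative ones. An isomorphism between `T - Y` and its dual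
exchanges the two kinds, so for `|Y| = 3` both kinds are equally numerous in `T - Y`. Kelly's
double counting lifts this equality to every set of at least `n - 3` vertices, since `5 ≤ n - 3`.
Inclusion–exclusion over `V`, `V - a`, `V - b`, `V - {a, b}` then equates the numbers of positive
and negative doubled diamonds containing both `a` and `b`; as `{a, b}` is an interval, these are
exactly the diamonds centred at `a` with `b` added.
-/

section SubsetCount

variable {V : Type*}

noncomputable def subsetCount (P : Set V → Prop) (U : Set V) : ℕ := {X | X ⊆ U ∧ P X}.ncard

variable [Finite V] {P Q : Set V → Prop} {k : ℕ}

/-- Kelly's lemma: each `k`-set counted in `U` is counted again in exactly `|U| - k` of the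
sets `U \ {x}`. -/
lemma sum_subsetCount_sdiff_singleton (hP : ∀ X, P X → X.ncard = k) (U : Set V) [Fintype U] :
    ∑ x ∈ U.toFinset, subsetCount P (U \ {x}) = (U.ncard - k) * subsetCount P U := by
  classical
  set F := {X | X ⊆ U ∧ P X}
  have hF : F.Finite := Set.toFinite F
  have hdel : ∀ x, subsetCount P (U \ {x}) = (hF.toFinset.filter (x ∉ ·)).card := by
    intro x
    rw [← Set.ncard_coe_finset, Finset.coe_filter, subsetCount]
    congr 1
    ext X
    simp only [F, hF.mem_toFinset, Set.subset_sdiff, Set.disjoint_singleton_right,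
      Set.mem_ofPred_eq]
    tauto
  have hmissing : ∀ X ∈ hF.toFinset, (U.toFinset.filter (· ∉ X)).card = U.ncard - k := by
    intro X hX
    obtain ⟨hXU, hPX⟩ := hF.mem_toFinset.mp hX
    rw [← Set.ncard_coe_finset, Finset.coe_filter]
    simp only [Set.mem_toFinset]
    exact (Set.ncard_sdiff hXU).trans (by rw [hP X hPX])
  calc ∑ x ∈ U.toFinset, subsetCount P (U \ {x})
      = ∑ x ∈ U.toFinset, (hF.toFinset.bipartiteAbove (fun x X => x ∉ X) x).card :=
        Finset.sum_congr rfl fun x _ => hdel x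
    _ = ∑ X ∈ hF.toFinset, (U.toFinset.bipartiteBelow (fun x X => x ∉ X) X).card :=
        Finset.sum_card_bipartiteAbove_eq_sum_card_bipartiteBelow _
    _ = ∑ X ∈ hF.toFinset, (U.ncard - k) := Finset.sum_congr rfl hmissing
    _ = (U.ncard - k) * subsetCount P U := by
        rw [Finset.sum_const, smul_eq_mul, mul_comm, subsetCount, Set.ncard_eq_toFinset_card F hF]

lemma subsetCount_eq_of_forall_sdiff_singleton (hP : ∀ X, P X → X.ncard = k)
    (hQ : ∀ X, Q X → X.ncard = k) {U : Set V} (hU : k < U.ncard)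
    (h : ∀ x ∈ U, subsetCount P (U \ {x}) = subsetCount Q (U \ {x})) :
    subsetCount P U = subsetCount Q U := by
  classical
  have := Fintype.ofFinite U
  have hsum := sum_subsetCount_sdiff_singleton hP U
  rw [Finset.sum_congr rfl fun x hx => h x (Set.mem_toFinset.mp hx),
    sum_subsetCount_sdiff_singleton hQ U] at hsum
  exact (Nat.eq_of_mul_eq_mul_left (by omega) hsum).symm

lemma subsetCount_eq_of_le_ncard (hP : ∀ X, P X → X.ncard = k) (hQ : ∀ X, Q X → X.ncard = k)
    {m : ℕ} (hkm : k ≤ m)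
    (hbase : ∀ U : Set V, U.ncard = m → subsetCount P U = subsetCount Q U)
    {U : Set V} (hU : m ≤ U.ncard) : subsetCount P U = subsetCount Q U := by
  obtain ⟨s, hs⟩ : ∃ s, U.ncard = s := ⟨_, rfl⟩
  induction s, (hs ▸ hU : m ≤ s) using Nat.le_induction generalizing U with
  | base => exact hbase U hs
  | succ s hms ih =>
    refine subsetCount_eq_of_forall_sdiff_singleton hP hQ (by omega) fun x hx => ?_
    have hsx : (U \ {x}).ncard = s := by rw [Set.ncard_sdiff_singleton_of_mem hx, hs]; rfl
    exact ih (hsx ▸ hms) hsx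

lemma ncard_mem_mem_add_subsetCount (P : Set V → Prop) (a b : V) :
    {X | P X ∧ a ∈ X ∧ b ∈ X}.ncard + subsetCount P {a}ᶜ + subsetCount P {b}ᶜ =
      subsetCount P Set.univ + subsetCount P {a, b}ᶜ := by
  simp only [subsetCount]
  set A := {X | X ⊆ {a}ᶜ ∧ P X}
  set B := {X | X ⊆ {b}ᶜ ∧ P X}
  have hunion : {X | P X ∧ a ∈ X ∧ b ∈ X} ∪ (A ∪ B) = {X | X ⊆ Set.univ ∧ P X} := by
    ext X
    simp only [A, B, Set.mem_union, Set.mem_ofPred_eq, Set.subset_compl_singleton_iff,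
      Set.subset_univ, true_and]
    tauto
  have hdisj : Disjoint {X | P X ∧ a ∈ X ∧ b ∈ X} (A ∪ B) := by
    rw [Set.disjoint_left]
    rintro X ⟨-, ha, hb⟩ (⟨hX, -⟩ | ⟨hX, -⟩)
    exacts [Set.subset_compl_singleton_iff.mp hX ha, Set.subset_compl_singleton_iff.mp hX hb]
  have hinter : A ∩ B = {X | X ⊆ {a, b}ᶜ ∧ P X} := by
    ext X
    simp only [A, B, Set.mem_inter_iff, Set.mem_ofPred_eq, Set.subset_compl_singleton_iff,
      Set.subset_compl_comm (s := X), Set.insert_subset_iff, Set.singleton_subset_iff,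
      Set.mem_compl_iff]
    tauto
  have h1 := Set.ncard_union_eq hdisj
  have h2 := Set.ncard_union_add_ncard_inter A B
  rw [hunion] at h1
  rw [hinter] at h2
  omega

lemma ncard_mem_mem_eq_of_subsetCount_eq {a b : V}
    (h : ∀ U : Set V, ({a, b} : Set V)ᶜ ⊆ U → subsetCount P U = subsetCount Q U) :
    {X | P X ∧ a ∈ X ∧ b ∈ X}.ncard = {X | Q X ∧ a ∈ X ∧ b ∈ X}.ncard := by
  have hP := ncard_mem_mem_add_subsetCount P a b
  have hQ := ncard_mem_mem_add_subsetCount Q a b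
  rw [h Set.univ (Set.subset_univ _), h {a}ᶜ (Set.compl_subset_compl.mpr (by simp)),
    h {b}ᶜ (Set.compl_subset_compl.mpr (by simp)), h _ le_rfl] at hP
  omega

lemma subsetCount_le_of_injOn {U : Set V} {g : V → V} (hg : Set.InjOn g U)
    (hmaps : Set.MapsTo g U U) (hPQ : ∀ X ⊆ U, P X → Q (g '' X)) :
    subsetCount P U ≤ subsetCount Q U :=
  Set.ncard_le_ncard_of_injOn (g '' ·)
    (fun X ⟨hXU, hX⟩ => ⟨(Set.image_mono hXU).trans hmaps.image_subset, hPQ X hXU hX⟩)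
    (fun _ hX _ hY h => (hg.image_eq_image_iff hX.1 hY.1).mp h)

end SubsetCount

namespace Tournament

variable {V W α : Type*} {T : Tournament V}

lemma ne_of_arc {x y : V} (h : T.arc x y) : x ≠ y := by
  rintro rfl
  exact T.irrefl x h

lemma not_arc_of_arc {x y : V} (h : T.arc x y) : ¬ T.arc y x :=
  (T.total x y (ne_of_arc h)).mp h

lemma arc_or_arc {x y : V} (h : x ≠ y) : T.arc x y ∨ T.arc y x := by
  by_cases hxy : T.arc x y
  · exact Or.inl hxy
  · exact Or.inr ((T.total y x h.symm).mpr hxy)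

lemma iso_dual_iff {S : Tournament W} : T.Iso S.dual ↔ T.dual.Iso S :=
  ⟨fun ⟨e, he⟩ => ⟨e, fun x y => he y x⟩, fun ⟨e, he⟩ => ⟨e, fun x y => he y x⟩⟩

lemma IsInterval.dual {I : Set V} (hI : T.IsInterval I) : T.dual.IsInterval I :=
  fun x hx => (hI x hx).symm

lemma restrict_iso_iff {X : Set V} {H : Tournament α} :
    (T.restrict X).Iso H ↔
      ∃ f : α → V, Set.range f = X ∧ ∀ i j, T.arc (f i) (f j) ↔ H.arc i j := by
  constructor
  · rintro ⟨e, he⟩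
    refine ⟨fun i => e.symm i, ?_, fun i j => (he (e.symm i) (e.symm j)).trans (by simp)⟩
    ext x
    exact ⟨by rintro ⟨i, rfl⟩; exact (e.symm i).2, fun hx => ⟨e ⟨x, hx⟩, by simp⟩⟩
  · rintro ⟨f, rfl, hf⟩
    have hinj : Function.Injective f := by
      intro i j hij
      by_contra hne
      rcases H.arc_or_arc hne with h | h
      · have h' := (hf i j).mpr h
        rw [hij] at h'
        exact T.irrefl _ h'
      · have h' := (hf j i).mpr h
        rw [hij] at h'
        exact T.irrefl _ h'
    refine ⟨(Equiv.ofInjective f hinj).symm, fun x y => ?_⟩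
    show T.arc x y ↔ _
    rw [← hf, Equiv.apply_ofInjective_symm hinj, Equiv.apply_ofInjective_symm hinj]

def IsThreeCycle (T : Tournament V) (C : Set V) : Prop :=
  ∃ u v w, T.arc u v ∧ T.arc v w ∧ T.arc w u ∧ C = {u, v, w}

section IsThreeCycle

variable {C : Set V}

lemma IsThreeCycle.ncard_eq (hC : T.IsThreeCycle C) : C.ncard = 3 := by
  obtain ⟨u, v, w, h1, h2, h3, rfl⟩ := hC
  exact Set.ncard_eq_three.mpr ⟨u, v, w, ne_of_arc h1, (ne_of_arc h3).symm, ne_of_arc h2, rfl⟩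

lemma IsThreeCycle.finite (hC : T.IsThreeCycle C) : C.Finite :=
  Set.finite_of_ncard_ne_zero (by simp [hC.ncard_eq])

lemma IsThreeCycle.exists_of_mem (hC : T.IsThreeCycle C) {x : V} (hx : x ∈ C) :
    ∃ y z, T.arc x y ∧ T.arc y z ∧ T.arc z x ∧ C = {x, y, z} := by
  obtain ⟨u, v, w, h1, h2, h3, rfl⟩ := hC
  rcases hx with rfl | rfl | rfl
  · exact ⟨v, w, h1, h2, h3, rfl⟩
  · exact ⟨w, u, h2, h3, h1, by rw [Set.insert_comm, Set.pair_comm]⟩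
  · exact ⟨u, v, h3, h1, h2, by rw [Set.pair_comm, Set.insert_comm]⟩

lemma IsThreeCycle.image {T' : Tournament W} (hC : T.IsThreeCycle C) (f : V → W)
    (hf : ∀ x ∈ C, ∀ y ∈ C, T.arc x y → T'.arc (f x) (f y)) :
    T'.IsThreeCycle (f '' C) := by
  obtain ⟨u, v, w, h1, h2, h3, rfl⟩ := hC
  exact ⟨f u, f v, f w, hf _ (by simp) _ (by simp) h1, hf _ (by simp) _ (by simp) h2,
    hf _ (by simp) _ (by simp) h3, by simp only [Set.image_insert_eq, Set.image_singleton]⟩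

lemma IsThreeCycle.dual (hC : T.IsThreeCycle C) : T.dual.IsThreeCycle C := by
  obtain ⟨u, v, w, h1, h2, h3, rfl⟩ := hC
  exact ⟨u, w, v, h3, h2, h1, by rw [Set.pair_comm]⟩

lemma isThreeCycle_dual_iff : T.dual.IsThreeCycle C ↔ T.IsThreeCycle C :=
  ⟨IsThreeCycle.dual (T := T.dual), IsThreeCycle.dual⟩

lemma isThreeCycle_iff_iso : T.IsThreeCycle C ↔ (T.restrict C).Iso C3Tour := by
  rw [restrict_iso_iff]
  constructor
  · rintro ⟨u, v, w, h1, h2, h3, rfl⟩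
    refine ⟨![u, v, w], ?_, fun i j => ?_⟩
    · simp only [Matrix.range_cons, Matrix.range_empty, Set.union_empty, Set.singleton_union]
    · fin_cases i <;> fin_cases j <;>
        simp [C3Tour, h1, h2, h3, not_arc_of_arc h1, not_arc_of_arc h2, not_arc_of_arc h3,
          T.irrefl]
  · rintro ⟨f, rfl, hf⟩
    refine ⟨f 0, f 1, f 2, (hf 0 1).mpr (by simp [C3Tour]), (hf 1 2).mpr (by simp [C3Tour]),
      (hf 2 0).mpr (by simp [C3Tour]), ?_⟩
    ext x
    simp [Fin.exists_fin_succ, eq_comm]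

end IsThreeCycle

lemma isPosDiamond_iff {X : Set V} {d : V} :
    T.IsPosDiamond X d ↔
      ∃ C, T.IsThreeCycle C ∧ (∀ c ∈ C, T.arc c d) ∧ X = insert d C := by
  constructor
  · rintro ⟨-, hd, -, hC, hdom⟩
    exact ⟨X \ {d}, isThreeCycle_iff_iso.mpr hC, hdom,
      by rw [Set.insert_sdiff_singleton, Set.insert_eq_of_mem hd]⟩
  · rintro ⟨C, hC, hdom, rfl⟩
    have hdC : d ∉ C := fun h => T.irrefl d (hdom d h)
    have hCd : insert d C \ {d} = C := Set.insert_sdiff_self_of_notMem hdC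
    refine ⟨by rw [Set.ncard_insert_of_notMem hdC hC.finite, hC.ncard_eq], Set.mem_insert d C, ?_,
      by rwa [hCd, ← isThreeCycle_iff_iso], by rwa [hCd]⟩
    obtain ⟨u, v, w, h1, h2, h3, rfl⟩ := hC
    have hu := hdom u (by simp)
    have hv := hdom v (by simp)
    have hw := hdom w (by simp)
    refine restrict_iso_iff.mpr ⟨![u, v, w, d], ?_, fun i j => ?_⟩
    · simp only [Matrix.range_cons, Matrix.range_empty, Set.union_empty, Set.singleton_union]
      ext x
      simp only [Set.mem_insert_iff, Set.mem_singleton_iff]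
      tauto
    · fin_cases i <;> fin_cases j <;>
        simp [DeltaPlus, h1, h2, h3, hu, hv, hw, not_arc_of_arc h1, not_arc_of_arc h2,
          not_arc_of_arc h3, not_arc_of_arc hu, not_arc_of_arc hv, not_arc_of_arc hw, T.irrefl]

lemma isNegDiamond_iff {X : Set V} {d : V} : T.IsNegDiamond X d ↔ T.dual.IsPosDiamond X d := by
  simp only [IsNegDiamond, IsPosDiamond, DeltaMinus, iso_dual_iff, ← isThreeCycle_iff_iso,
    isThreeCycle_dual_iff]
  rfl

section IntervalPair

variable {a b c : V} {C : Set V}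

lemma IsInterval.arc_snd_of_arc_fst (hI : T.IsInterval {a, b}) (hca : c ≠ a) (hcb : c ≠ b)
    (h : T.arc c a) : T.arc c b := by
  rcases hI c (by simp [hca, hcb]) with h' | h'
  · exact h' b (by simp)
  · exact absurd (h' a (by simp)) (not_arc_of_arc h)

lemma IsInterval.snd_arc_of_fst_arc (hI : T.IsInterval {a, b}) (hca : c ≠ a) (hcb : c ≠ b)
    (h : T.arc a c) : T.arc b c :=
  hI.dual.arc_snd_of_arc_fst hca hcb h

lemma IsThreeCycle.exists_arc_of_isInterval (hC : T.IsThreeCycle C) (hI : T.IsInterval {a, b})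
    (ha : a ∈ C) (hb : b ∉ C) : ∃ z ∈ C, T.arc b z := by
  obtain ⟨y, z, hay, -, -, rfl⟩ := hC.exists_of_mem ha
  exact ⟨y, by simp,
    hI.snd_arc_of_fst_arc (ne_of_arc hay).symm (fun h => hb (by simp [← h])) hay⟩

lemma IsThreeCycle.notMem_of_isInterval (hC : T.IsThreeCycle C) (hI : T.IsInterval {a, b})
    (hab : a ≠ b) (ha : a ∈ C) : b ∉ C := by
  obtain ⟨y, z, hay, hyz, hza, rfl⟩ := hC.exists_of_mem ha
  rintro (rfl | rfl | rfl)
  · exact hab rfl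
  · exact not_arc_of_arc hyz (hI.arc_snd_of_arc_fst (ne_of_arc hza) (ne_of_arc hyz).symm hza)
  · exact not_arc_of_arc hyz
      (hI.snd_arc_of_fst_arc (ne_of_arc hay).symm (ne_of_arc hyz) hay)

lemma IsThreeCycle.arc_of_isInterval (hC : T.IsThreeCycle C) (hI : T.IsInterval {a, b})
    (hdom : ∀ c ∈ C, T.arc c a) : b ∉ C ∧ ∀ c ∈ C, T.arc c b := by
  have hbC : b ∉ C := by
    intro hb
    obtain ⟨z, hz, haz⟩ := hC.exists_arc_of_isInterval (Set.pair_comm a b ▸ hI) hb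
      (fun ha => T.irrefl a (hdom a ha))
    exact not_arc_of_arc haz (hdom z hz)
  exact ⟨hbC, fun c hc => hI.arc_snd_of_arc_fst (ne_of_arc (hdom c hc))
    (fun h => hbC (h ▸ hc)) (hdom c hc)⟩

end IntervalPair

/-- A positive diamond whose center is doubled into two vertices `p`, `q`; the negative ones are
the doubled diamonds of `T.dual`. -/
def IsDoubledDiamond (T : Tournament V) (X : Set V) : Prop :=
  ∃ p q C, p ≠ q ∧ T.IsThreeCycle C ∧ (∀ c ∈ C, T.arc c p ∧ T.arc c q) ∧
    X = insert p (insert q C)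

section IsDoubledDiamond

variable {X : Set V}

lemma IsDoubledDiamond.ncard_eq (hX : T.IsDoubledDiamond X) : X.ncard = 5 := by
  obtain ⟨p, q, C, hpq, hC, hdom, rfl⟩ := hX
  have hpC : p ∉ C := fun h => T.irrefl p (hdom p h).1
  have hqC : q ∉ C := fun h => T.irrefl q (hdom q h).2
  rw [Set.ncard_insert_of_notMem (by simp [hpq, hpC]) (hC.finite.insert q),
    Set.ncard_insert_of_notMem hqC hC.finite, hC.ncard_eq]

lemma IsDoubledDiamond.image {T' : Tournament W} (hX : T.IsDoubledDiamond X) (f : V → W)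
    (hf : Set.InjOn f X) (harc : ∀ x ∈ X, ∀ y ∈ X, T.arc x y → T'.arc (f x) (f y)) :
    T'.IsDoubledDiamond (f '' X) := by
  obtain ⟨p, q, C, hpq, hC, hdom, rfl⟩ := hX
  have hCX : C ⊆ insert p (insert q C) := (Set.subset_insert _ _).trans (Set.subset_insert _ _)
  refine ⟨f p, f q, f '' C, fun h => hpq (hf (by simp) (by simp) h),
    hC.image f fun x hx y hy => harc x (hCX hx) y (hCX hy), ?_,
    by simp only [Set.image_insert_eq]⟩
  rintro _ ⟨c, hc, rfl⟩
  exact ⟨harc c (hCX hc) p (by simp) (hdom c hc).1, harc c (hCX hc) q (by simp) (hdom c hc).2⟩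

variable {a b : V}

lemma setOf_isDoubledDiamond_mem_mem (hI : T.IsInterval {a, b}) (hab : a ≠ b) :
    {X | T.IsDoubledDiamond X ∧ a ∈ X ∧ b ∈ X} = insert b '' {X | T.IsPosDiamond X a} := by
  have hI' : T.IsInterval {b, a} := Set.pair_comm a b ▸ hI
  ext X
  simp only [Set.mem_ofPred_eq, Set.mem_image, isPosDiamond_iff]
  constructor
  · rintro ⟨⟨p, q, C, hpq, hC, hdom, rfl⟩, ha, hb⟩
    have hnotMem : ∀ {x y : V}, T.IsInterval {x, y} → x ≠ y →
        y ∈ insert p (insert q C) → x ∉ C := by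
      intro x y hxy hne hy hx
      have hyC := hC.notMem_of_isInterval hxy hne hx
      obtain ⟨z, hz, hyz⟩ := hC.exists_arc_of_isInterval hxy hx hyC
      rcases hy with rfl | rfl | hy
      · exact not_arc_of_arc hyz (hdom z hz).1
      · exact not_arc_of_arc hyz (hdom z hz).2
      · exact hyC hy
    have haC := hnotMem hI hab hb
    have hbC := hnotMem hI' hab.symm ha
    obtain ⟨rfl, rfl⟩ | ⟨rfl, rfl⟩ : (a = p ∧ b = q) ∨ (a = q ∧ b = p) := by
      rcases ha with rfl | rfl | ha <;> rcases hb with rfl | rfl | hb <;> tauto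
    · exact ⟨_, ⟨C, hC, fun c hc => (hdom c hc).1, rfl⟩, Set.insert_comm b a C⟩
    · exact ⟨_, ⟨C, hC, fun c hc => (hdom c hc).2, rfl⟩, rfl⟩
  · rintro ⟨_, ⟨C, hC, hdom, rfl⟩, rfl⟩
    obtain ⟨hbC, hdomb⟩ := hC.arc_of_isInterval hI hdom
    exact ⟨⟨a, b, C, hab, hC, fun c hc => ⟨hdom c hc, hdomb c hc⟩, Set.insert_comm b a C⟩,
      by simp, by simp⟩

lemma ncard_setOf_isPosDiamond (hI : T.IsInterval {a, b}) (hab : a ≠ b) :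
    {X | T.IsPosDiamond X a}.ncard = {X | T.IsDoubledDiamond X ∧ a ∈ X ∧ b ∈ X}.ncard := by
  have hbX : ∀ {X}, T.IsPosDiamond X a → b ∉ X := by
    intro X hX
    obtain ⟨C, hC, hdom, rfl⟩ := isPosDiamond_iff.mp hX
    rintro (h | h)
    · exact hab h.symm
    · exact (hC.arc_of_isInterval hI hdom).1 h
  have hinj : Set.InjOn (insert b) {X | T.IsPosDiamond X a} := fun X hX Y hY h => by
    rw [← Set.insert_sdiff_self_of_notMem (hbX hX), h, Set.insert_sdiff_self_of_notMem (hbX hY)]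
  rw [setOf_isDoubledDiamond_mem_mem hI hab, hinj.ncard_image]

lemma ncard_setOf_isNegDiamond (hI : T.IsInterval {a, b}) (hab : a ≠ b) :
    {X | T.IsNegDiamond X a}.ncard =
      {X | T.dual.IsDoubledDiamond X ∧ a ∈ X ∧ b ∈ X}.ncard := by
  simp only [isNegDiamond_iff]
  exact ncard_setOf_isPosDiamond hI.dual hab

end IsDoubledDiamond

lemma exists_arc_reversing_of_restrict_selfDual {U : Set V} (h : (T.restrict U).SelfDual) :
    ∃ g : V → V, Set.InjOn g U ∧ Set.MapsTo g U U ∧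
      ∀ x ∈ U, ∀ y ∈ U, T.arc x y → T.arc (g y) (g x) := by
  classical
  obtain ⟨e, he⟩ := h
  let g : V → V := fun v => if hv : v ∈ U then e ⟨v, hv⟩ else v
  have hg : ∀ x : U, g x = e x := fun x => dif_pos x.2
  refine ⟨g, fun x hx y hy hxy => ?_, fun x hx => ?_, fun x hx y hy hxy => ?_⟩
  · rw [hg ⟨x, hx⟩, hg ⟨y, hy⟩] at hxy
    exact congrArg Subtype.val (e.injective (Subtype.ext hxy))
  · rw [hg ⟨x, hx⟩]
    exact (e _).2
  · rw [hg ⟨x, hx⟩, hg ⟨y, hy⟩]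
    exact (he ⟨x, hx⟩ ⟨y, hy⟩).mp hxy

lemma subsetCount_isDoubledDiamond_dual [Finite V] {U : Set V} (h : (T.restrict U).SelfDual) :
    subsetCount T.IsDoubledDiamond U = subsetCount T.dual.IsDoubledDiamond U := by
  obtain ⟨g, hinj, hmaps, hrev⟩ := exists_arc_reversing_of_restrict_selfDual h
  exact le_antisymm
    (subsetCount_le_of_injOn hinj hmaps fun X hXU hX =>
      hX.image g (hinj.mono hXU) fun x hx y hy => hrev x (hXU hx) y (hXU hy))
    (subsetCount_le_of_injOn hinj hmaps fun X hXU hX =>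
      hX.image g (hinj.mono hXU) fun x hx y hy => hrev y (hXU hy) x (hXU hx))

end Tournament

/-- Let `T` be a `{-3}`-self dual tournament on `V` with
`|V| ≥ 8` and `a ≠ b` two vertices. If `{a,b}` is an interval of `T`, then
`δ⁺_T(a) = δ⁻_T(a)`. -/
theorem stmt12 {V : Type*} [Fintype V] (T : Tournament V)
    (hcard : 8 ≤ Fintype.card V) (hsd : T.MinusSelfDual 3) (a b : V)
    (hab : a ≠ b) (hI : T.IsInterval {a, b}) :
    {X : Set V | T.IsPosDiamond X a}.ncard =
      {X : Set V | T.IsNegDiamond X a}.ncard := by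
  have hcompl : ∀ U : Set V, Uᶜ.ncard = Fintype.card V - U.ncard := fun U => by
    rw [Set.ncard_compl, Nat.card_eq_fintype_card]
  have hcount : ∀ U : Set V, Fintype.card V - 3 ≤ U.ncard →
      subsetCount T.IsDoubledDiamond U = subsetCount T.dual.IsDoubledDiamond U :=
    fun U => subsetCount_eq_of_le_ncard (fun _ hX => hX.ncard_eq) (fun _ hX => hX.ncard_eq)
      (by omega) fun U hU => Tournament.subsetCount_isDoubledDiamond_dual
        (compl_compl U ▸ hsd Uᶜ (by rw [hcompl, hU]; omega))
  rw [Tournament.ncard_setOf_isPosDiamond hI hab, Tournament.ncard_setOf_isNegDiamond hI hab]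
  refine ncard_mem_mem_eq_of_subsetCount_eq fun U hU => hcount U ?_
  calc Fintype.card V - 3 ≤ ({a, b}ᶜ : Set V).ncard := by rw [hcompl, Set.ncard_pair hab]; omega
    _ ≤ U.ncard := Set.ncard_le_ncard hU
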